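/- arXiv:2005.02596 — 2 statements merged into one kernel-verified Lean document; each statement's English description precedes it below -/
import Mathlib

section
/- Suppose f is a transduction without data peeking, u, v are data words, σ ∈ Σ and d ∈ D. Then every data value occurring (as the data component of a retained triple) in f(u̲ | (σ,d) | v̲) is either d or a data value that is f-memorable in u. -/
namespace SSRT

/-- Elements of a factored output: either a retained output triple
(letter, data value, origin — integer origins allow shifting by `z`),
or one of the placeholder marks `(*,*,left)`, `(*,*,middle)`, `(*,*,right)`. -/
inductive FOElem (G D : Type) where
  | tri (g : G) (d : D) (o : ℤ)
  | left
  | middle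
  | right
  deriving DecidableEq

namespace FOElem

def isTri {G D : Type} : FOElem G D → Bool
  | .tri _ _ _ => true
  | _ => false

def isMark {G D : Type} (e : FOElem G D) : Bool := !e.isTri

end FOElem

/-- Data words over the input alphabet `A` with data from `D`. -/
abbrev DataWord (A D : Type) := List (A × D)

/-- Data words with origin information over the output alphabet `G`;
positions of the input are numbered 1,…,n. -/
abbrev OutWord (G D : Type) := List (G × D × ℕ)

/-- A transduction. -/
abbrev Transduction (A G D : Type) := DataWord A D → OutWord G D

variable {A G D : Type}

/-- Apply a permutation of data values to a data word. -/
def permW (π : Equiv.Perm D) (u : DataWord A D) : DataWord A D :=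
  u.map fun p => (p.1, π p.2)

/-- Apply a permutation of data values to an output word. -/
def permOut (π : Equiv.Perm D) (w : OutWord G D) : OutWord G D :=
  w.map fun t => (t.1, π t.2.1, t.2.2)

/-- Apply a permutation of data values to a factored output
(placeholder marks are unchanged). -/
def permFO (π : Equiv.Perm D) : List (FOElem G D) → List (FOElem G D) :=
  List.map fun e => match e with
    | .tri g d o => .tri g (π d) o
    | .left => .left
    | .middle => .middle
    | .right => .right

/-- Shift the origin of every retained triple by `z`. -/
def foShift (z : ℤ) : List (FOElem G D) → List (FOElem G D) :=
  List.map fun e => match e with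
    | .tri g d o => .tri g d (o + z)
    | .left => .left
    | .middle => .middle
    | .right => .right

/-- `f` is invariant under permutations. -/
def PermInvariant (f : Transduction A G D) : Prop :=
  ∀ (π : Equiv.Perm D) (u : DataWord A D), f (permW π u) = permOut π (f u)

/-- `f` is without data peeking: every data value output from origin `o`
already occurs in the input at some position `≤ o`. -/
def NoDataPeeking (f : Transduction A G D) : Prop :=
  ∀ (w : DataWord A D) (t : G × D × ℕ), t ∈ f w →
    ∃ (i : ℕ) (a : A), w[i]? = some (a, t.2.1) ∧ i + 1 ≤ t.2.2

/-- `f` has linear blow up. -/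
def LinearBlowUp (f : Transduction A G D) : Prop :=
  ∃ K : ℕ, ∀ (w : DataWord A D) (o : ℕ), 1 ≤ o → o ≤ w.length →
    ((f w).filter fun t => t.2.2 == o).length ≤ K

variable [DecidableEq G] [DecidableEq D]

/-- Merge consecutive occurrences of equal placeholder marks into one. -/
def collapse : List (FOElem G D) → List (FOElem G D)
  | [] => []
  | [a] => [a]
  | a :: b :: rest =>
      if a = b ∧ a.isMark then collapse (b :: rest)
      else a :: collapse (b :: rest)

/-- The factored output `f(u̲ ∣ v)`. -/
def leftFac (f : Transduction A G D) (u v : DataWord A D) : List (FOElem G D) :=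
  collapse ((f (u ++ v)).map fun t =>
    if t.2.2 ≤ u.length then FOElem.left else FOElem.tri t.1 t.2.1 (t.2.2 : ℤ))

/-- The factored output `f(u ∣ v̲)`. -/
def rightFac (f : Transduction A G D) (u v : DataWord A D) : List (FOElem G D) :=
  collapse ((f (u ++ v)).map fun t =>
    if u.length < t.2.2 then FOElem.right else FOElem.tri t.1 t.2.1 (t.2.2 : ℤ))

/-- The factored output `f(u̲ ∣ v ∣ w̲)`. -/
def threeFac (f : Transduction A G D) (u v w : DataWord A D) : List (FOElem G D) :=
  collapse ((f (u ++ v ++ w)).map fun t =>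
    if t.2.2 ≤ u.length then FOElem.left
    else if t.2.2 ≤ u.length + v.length then FOElem.tri t.1 t.2.1 (t.2.2 : ℤ)
    else FOElem.right)

/-- The factored output `f(u̲ ∣ v̲ ∣ w̲)`. -/
def allFac (f : Transduction A G D) (u v w : DataWord A D) : List (FOElem G D) :=
  collapse ((f (u ++ v ++ w)).map fun t =>
    if t.2.2 ≤ u.length then FOElem.left
    else if t.2.2 ≤ u.length + v.length then FOElem.middle
    else FOElem.right)

/-- `u[d/d']`: replace every occurrence of the data value `d` by `d'`. -/
def replaceD (u : DataWord A D) (d d' : D) : DataWord A D :=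
  u.map fun p => (p.1, if p.2 = d then d' else p.2)

/-- Isomorphism of data words: same length, same letters, and the same
equalities among the data values at the various positions. -/
def Iso (u u' : DataWord A D) : Prop :=
  u.length = u'.length ∧
  (∀ i : ℕ, u[i]?.map Prod.fst = u'[i]?.map Prod.fst) ∧
  (∀ i j : ℕ, (u[i]?.map Prod.snd = u[j]?.map Prod.snd) ↔
          (u'[i]?.map Prod.snd = u'[j]?.map Prod.snd))

/-- `d'` is a safe replacement for `d` in `u`. -/
def SafeRepl (d d' : D) (u : DataWord A D) : Prop := Iso (replaceD u d d') u

def OccursIn (d : D) (u : DataWord A D) : Prop := ∃ p ∈ u, p.2 = d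

/-- `d` is `f`-memorable in `u`. -/
def Memorable (f : Transduction A G D) (d : D) (u : DataWord A D) : Prop :=
  ∃ (v : DataWord A D) (d' : D), SafeRepl d d' u ∧
    leftFac f (replaceD u d d') v ≠ leftFac f u v

/-- `d` is `f`-vulnerable in `u`. -/
def Vulnerable (f : Transduction A G D) (d : D) (u : DataWord A D) : Prop :=
  ∃ (u' v : DataWord A D) (d' : D), ¬ OccursIn d u' ∧
    SafeRepl d d' (u ++ u' ++ v) ∧
    rightFac f (u ++ u') (replaceD v d d') ≠ rightFac f (u ++ u') v

/-- `d` is `f`-influencing in `u`. -/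
def Influencing (f : Transduction A G D) (d : D) (u : DataWord A D) : Prop :=
  Memorable f d u ∨ Vulnerable f d u

/-- The last occurrence of `d` in `u` is at (0-based) index `i`. -/
def IsLastOcc (u : DataWord A D) (d : D) (i : ℕ) : Prop :=
  (∃ a : A, u[i]? = some (a, d)) ∧ ∀ j : ℕ, i < j → ∀ p : A × D, u[j]? = some p → p.2 ≠ d

/-- `d` is fresher than `e` in `u`: the last occurrence of `d` in `u` is
strictly to the right of the last occurrence of `e`. -/
def Fresher (u : DataWord A D) (d e : D) : Prop :=
  ∃ i j : ℕ, IsLastOcc u d i ∧ IsLastOcc u e j ∧ j < i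

/-- `l` is the sequence of all `f`-influencing values of `u`, listed freshest
first: the `i`-th element (1-based) is the `i`-th `f`-influencing value of `u`.
(The paper writes this sequence in the reverse direction, as `d_m ⋯ d_1`.) -/
def IsIflSeq (f : Transduction A G D) (u : DataWord A D) (l : List D) : Prop :=
  (∀ d, d ∈ l ↔ Influencing f d u) ∧ l.Nodup ∧
  ∀ (i j : ℕ) (hi : i < l.length) (hj : j < l.length), i < j →
    Fresher u (l.get ⟨i, hi⟩) (l.get ⟨j, hj⟩)

/-- The type annotation of an influencing value. -/
inductive IflType where
  | vm | m | v
  deriving DecidableEq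

def HasIflType (f : Transduction A G D) (u : DataWord A D) (d : D) :
    IflType → Prop
  | .vm => Memorable f d u ∧ Vulnerable f d u
  | .m => Memorable f d u ∧ ¬ Vulnerable f d u
  | .v => Vulnerable f d u ∧ ¬ Memorable f d u

/-- `al` is `aifl_f(u)` (listed freshest first). -/
def IsAiflSeq (f : Transduction A G D) (u : DataWord A D)
    (al : List (D × IflType)) : Prop :=
  IsIflSeq f u (al.map Prod.fst) ∧ ∀ p ∈ al, HasIflType f u p.1 p.2

/-- The equivalence `u1 ≡_f u2`. -/
def FEquiv (f : Transduction A G D) (u1 u2 : DataWord A D) : Prop :=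
  ∃ π : Equiv.Perm D,
    (∀ v, foShift ((u1.length : ℤ) - (u2.length : ℤ))
        (leftFac f (permW π u2) v) = leftFac f u1 v) ∧
    (∀ al, IsAiflSeq f (permW π u2) al ↔ IsAiflSeq f u1 al) ∧
    (∀ u v1 v2, (rightFac f (u1 ++ u) v1 = rightFac f (u1 ++ u) v2) ↔
        (rightFac f (permW π u2 ++ u) v1 = rightFac f (permW π u2 ++ u) v2))

/-- `≡_f` has finitely many equivalence classes. -/
def FEquivFiniteIndex (f : Transduction A G D) : Prop :=
  ∃ S : Set (DataWord A D), S.Finite ∧ ∀ u, ∃ r ∈ S, FEquiv f r u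

/-- `E` is an equalizing scheme for `f` with associated sequence `δ 1, δ 2, ⋯`
(the value `δ 0` is irrelevant here): for every data word `u`, the `i`-th
`f`-influencing value of `E(u)(u)` is `δ i`. -/
def IsEqualizingSchemeWith (f : Transduction A G D)
    (E : DataWord A D → Equiv.Perm D) (δ : ℕ → D) : Prop :=
  ∀ (u : DataWord A D) (l : List D), IsIflSeq f (permW (E u) u) l →
    ∀ (i : ℕ) (h : i < l.length), l.get ⟨i, h⟩ = δ (i + 1)

def IsEqualizingScheme (f : Transduction A G D)
    (E : DataWord A D → Equiv.Perm D) : Prop :=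
  ∃ δ : ℕ → D, IsEqualizingSchemeWith f E δ

/-- `v1 ≡_f^E v2`. -/
def REquiv (f : Transduction A G D) (E : DataWord A D → Equiv.Perm D)
    (v1 v2 : DataWord A D) : Prop :=
  ∀ u, rightFac f (permW (E u) u) v1 = rightFac f (permW (E u) u) v2

/-- `≡_f^E` has finitely many equivalence classes. -/
def REquivFiniteIndex (f : Transduction A G D)
    (E : DataWord A D → Equiv.Perm D) : Prop :=
  ∃ S : Set (DataWord A D), S.Finite ∧ ∀ v, ∃ r ∈ S, REquiv f E r v

/-- The blocks of a factored output: the maximal infixes consisting of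
retained triples, in order. -/
def triBlocks (l : List (FOElem G D)) : List (List (FOElem G D)) :=
  (l.splitOnP fun e => !e.isTri).filter fun b => !b.isEmpty

/-- Helper for concretizing non-right blocks: walk `f(u̲ ∣ v̲ ∣ w̲)` and
substitute the `i`-th occurrence of the left mark by the `i`-th left block
(taken from `L`) and the `j`-th occurrence of the middle mark by the `j`-th
middle block (taken from `M`); right marks are turned into separators. -/
def annotateNR (L M : List (List (FOElem G D))) :
    List (FOElem G D) → ℕ → ℕ → List (Option (List (FOElem G D)))
  | [], _, _ => []
  | .left :: rest, i, j => some (L.getD i []) :: annotateNR L M rest (i + 1) j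
  | .middle :: rest, i, j => some (M.getD j []) :: annotateNR L M rest i (j + 1)
  | .right :: rest, i, j => none :: annotateNR L M rest i j
  | .tri g d o :: rest, i, j => some [.tri g d o] :: annotateNR L M rest i j

/-- The concretizations of the non-right blocks of `f(u̲ ∣ v̲ ∣ w̲)`, in order:
the concretization of a non-right block is the concatenation of the
concretizations of the left blocks (taken from `f(u ∣ v·w̲)`) and the middle
blocks (taken from `f(u̲ ∣ v ∣ w̲)`) occurring in it. -/
def concretizedNRBlocks (f : Transduction A G D) (u v w : DataWord A D) :
    List (List (FOElem G D)) :=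
  (((annotateNR (triBlocks (rightFac f u (v ++ w))) (triBlocks (threeFac f u v w))
        (allFac f u v w) 0 0).splitOnP fun o => o.isNone).filter
      fun grp => !grp.isEmpty).map fun grp => grp.reduceOption.flatten

/-- `π` tracks influencing values (relative to the sequence `δ`) on `w`:
the `i`-th `f`-influencing value of `w` is `π (δ i)`. -/
def TracksInfluencing (f : Transduction A G D) (δ : ℕ → D) (π : Equiv.Perm D)
    (w : DataWord A D) : Prop :=
  ∀ l, IsIflSeq f w l → ∀ (i : ℕ) (h : i < l.length), l.get ⟨i, h⟩ = π (δ (i + 1))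

end SSRT

open SSRT


section Helpers

variable {A G D : Type} [DecidableEq G] [DecidableEq D]

theorem mem_of_mem_collapse : ∀ {l : List (FOElem G D)} {x}, x ∈ collapse l → x ∈ l
  | [], x, h => by simpa [collapse] using h
  | [a], x, h => by simpa [collapse] using h
  | a :: b :: rest, x, h => by
      rw [collapse] at h
      split at h
      · exact List.mem_cons_of_mem a (mem_of_mem_collapse h)
      · rcases List.mem_cons.mp h with rfl | h
        · exact List.mem_cons_self
        · exact List.mem_cons_of_mem a (mem_of_mem_collapse h)

theorem tri_mem_collapse : ∀ {l : List (FOElem G D)} {x},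
    x ∈ l → x.isTri = true → x ∈ collapse l
  | [], x, h, _ => absurd h List.not_mem_nil
  | [a], x, h, _ => by simpa [collapse] using h
  | a :: b :: rest, x, h, ht => by
      rw [collapse]
      split
      · rename_i hc
        rcases List.mem_cons.mp h with rfl | h
        · exact tri_mem_collapse (by rw [hc.1]; exact List.mem_cons_self) ht
        · exact tri_mem_collapse h ht
      · rcases List.mem_cons.mp h with rfl | h
        · exact List.mem_cons_self
        · exact List.mem_cons_of_mem a (tri_mem_collapse h ht)

theorem safeRepl_of_not_mem (u : DataWord A D) (e d' : D)
    (hd' : ∀ p ∈ u, p.2 ≠ d') : SafeRepl e d' u := by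
  refine ⟨by simp [replaceD], fun i => ?_, fun i j => ?_⟩
  · cases h : u[i]? <;> simp [replaceD, List.getElem?_map, h]
  · have key : ∀ {k : ℕ} {p : A × D}, u[k]? = some p →
        (if p.2 = e then d' else p.2) = d' → p.2 = e ∨ p.2 = d' := by
      intro k p hk h
      by_cases hp : p.2 = e
      · exact Or.inl hp
      · right; simpa [hp] using h
    cases hi : u[i]? with
    | none => cases hj : u[j]? with
      | none => simp [replaceD, List.getElem?_map, hi, hj]
      | some q => simp [replaceD, List.getElem?_map, hi, hj]
    | some p => cases hj : u[j]? with
      | none => simp [replaceD, List.getElem?_map, hi, hj]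
      | some q =>
        have hpm : p ∈ u := by
          obtain ⟨hl, rfl⟩ := List.getElem?_eq_some_iff.mp hi
          exact List.getElem_mem hl
        have hqm : q ∈ u := by
          obtain ⟨hl, rfl⟩ := List.getElem?_eq_some_iff.mp hj
          exact List.getElem_mem hl
        simp only [replaceD, List.getElem?_map, hi, hj, Option.map_some,
          Option.some.injEq]
        constructor
        · intro h
          by_cases hp : p.2 = e <;> by_cases hq : q.2 = e
          · rw [hp, hq]
          · simp only [hp, hq, if_pos, if_neg, if_true] at h
            exact absurd h.symm (hd' q hqm)
          · simp only [hp, hq, if_neg, if_true] at h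
            exact absurd h (hd' p hpm)
          · simpa [hp, hq] using h
        · intro h; rw [h]

end Helpers

/-- Lemma 30: data values occurring in
`f(u̲ ∣ (σ,d) ∣ v̲)` are either `d` or `f`-memorable in `u`. -/
theorem curr_or_memorable
    {D A G : Type} [DecidableEq D] [Infinite D] [DecidableEq G]
    [Fintype A] [Fintype G]
    (f : Transduction A G D) (hpeek : NoDataPeeking f)
    (u v : DataWord A D) (σ : A) (d : D) :
    ∀ (g : G) (e : D) (o : ℤ),
      FOElem.tri g e o ∈ threeFac f u [(σ, d)] v →
        e = d ∨ Memorable f e u := by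
  intro g e o hmem
  by_cases hed : e = d
  · exact Or.inl hed
  right
  obtain ⟨t, htf, htm⟩ := List.mem_map.mp (mem_of_mem_collapse hmem)
  rw [List.length_singleton] at htm
  split_ifs at htm with h2 h3 <;> simp at htm
  obtain ⟨hg, he, ho⟩ := htm
  have ht22 : t.2.2 = u.length + 1 := by omega
  have hw : u ++ [(σ, d)] ++ v = u ++ ((σ, d) :: v) := by
    rw [List.append_assoc]; rfl
  -- e occurs in u
  obtain ⟨i, a, hia, hile⟩ := hpeek _ t htf
  rw [hw] at hia
  have hilt : i < u.length := by
    rcases lt_or_eq_of_le (by omega : i ≤ u.length) with h | h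
    · exact h
    · exfalso
      rw [h, List.getElem?_append, if_neg (lt_irrefl _)] at hia
      simp at hia
      exact hed (he ▸ hia.2.symm)
  have heu : (a, e) ∈ u := by
    rw [List.getElem?_append, if_pos hilt, he] at hia
    obtain ⟨hl, hv⟩ := List.getElem?_eq_some_iff.mp hia
    exact hv ▸ List.getElem_mem hl
  -- fresh value d'
  obtain ⟨d', hd'⟩ := Infinite.exists_notMem_finset (u.map Prod.snd).toFinset
  have hd'u : ∀ p ∈ u, p.2 ≠ d' := by
    intro p hp h
    exact hd' (List.mem_toFinset.mpr (List.mem_map.mpr ⟨p, hp, h⟩))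
  have hd'e : d' ≠ e := fun h => hd'u _ heu h.symm
  refine ⟨(σ, d) :: v, d', safeRepl_of_not_mem u e d' hd'u, ?_⟩
  set r := replaceD u e d' with hrdef
  have hr : r.length = u.length := by simp [hrdef, replaceD]
  -- Claim A : the triple is in leftFac f u ((σ,d)::v)
  have hA : FOElem.tri g e o ∈ leftFac f u ((σ, d) :: v) := by
    unfold leftFac
    refine tri_mem_collapse (List.mem_map.mpr ⟨t, ?_, ?_⟩) rfl
    · rw [← hw]; exact htf
    · rw [if_neg h2, FOElem.tri.injEq]; exact ⟨hg, he, ho⟩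
  -- Claim B : the triple is not in leftFac f r ((σ,d)::v)
  have hB : FOElem.tri g e o ∉ leftFac f r ((σ, d) :: v) := by
    intro hBm
    obtain ⟨s, hsf, hsm⟩ := List.mem_map.mp (mem_of_mem_collapse hBm)
    split_ifs at hsm with hs1 <;> simp at hsm
    obtain ⟨hg', he', ho'⟩ := hsm
    have hs22 : s.2.2 = u.length + 1 := by
      have : (s.2.2 : ℤ) = (t.2.2 : ℤ) := by rw [ho, ho']
      omega
    obtain ⟨i', a', hia', hile'⟩ := hpeek _ s hsf
    rw [he'] at hia'
    rcases lt_or_eq_of_le (by omega : i' ≤ r.length) with hlt | hq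
    · rw [List.getElem?_append, if_pos hlt] at hia'
      obtain ⟨hl, hv⟩ := List.getElem?_eq_some_iff.mp hia'
      have hmr : (a', e) ∈ r := hv ▸ List.getElem_mem hl
      rw [hrdef] at hmr
      unfold replaceD at hmr
      obtain ⟨q, hqu, hqe⟩ := List.mem_map.mp hmr
      have hq2 : (if q.2 = e then d' else q.2) = e := congrArg Prod.snd hqe
      by_cases hqq : q.2 = e
      · rw [if_pos hqq] at hq2; exact hd'e hq2
      · rw [if_neg hqq] at hq2; exact hqq hq2
    · rw [hq, List.getElem?_append, if_neg (lt_irrefl _)] at hia'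
      simp at hia'
      exact hed hia'.2.symm
  intro heq
  rw [heq] at hB
  exact hB hA
end

section
/- Suppose f is a transduction that is invariant under permutations and without data peeking, u is a data word, and e is a data value. If d is a data value that is not f-influencing in u and d' is a safe replacement for d in u, then e is f-memorable (resp. f-vulnerable) in u if and only if e is f-memorable (resp. f-vulnerable) in u[d/d']. -/
namespace SSRT
set_option linter.unusedSectionVars false
variable {A G D : Type} [DecidableEq G] [DecidableEq D]

lemma permW_append (π : Equiv.Perm D) (a b : DataWord A D) :
    permW π (a ++ b) = permW π a ++ permW π b := List.map_append

lemma permW_length (π : Equiv.Perm D) (a : DataWord A D) :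
    (permW π a).length = a.length := List.length_map _

lemma permW_symm_permW (π : Equiv.Perm D) (a : DataWord A D) :
    permW π.symm (permW π a) = a := by
  rw [permW, permW, List.map_map]
  refine (List.map_congr_left fun p _ => ?_).trans (List.map_id a)
  simp

lemma occursIn_permW (π : Equiv.Perm D) (d : D) (a : DataWord A D) :
    OccursIn (π d) (permW π a) ↔ OccursIn d a := by
  constructor
  · rintro ⟨p, hp, hpd⟩
    simp only [permW, List.mem_map] at hp
    obtain ⟨q, hq, rfl⟩ := hp
    exact ⟨q, hq, π.injective hpd⟩
  · rintro ⟨p, hp, hpd⟩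
    exact ⟨(p.1, π p.2), List.mem_map_of_mem (f := fun p : A × D => (p.1, π p.2)) hp, by rw [hpd]⟩

lemma replaceD_self (a : DataWord A D) (d : D) : replaceD a d d = a := by
  refine (List.map_congr_left fun p _ => ?_).trans (List.map_id a)
  obtain ⟨x, y⟩ := p
  simp only [id]; split <;> simp_all

lemma replaceD_not_occ {a : DataWord A D} {d : D} (h : ¬ OccursIn d a) (d' : D) :
    replaceD a d d' = a := by
  refine (List.map_congr_left fun p hp => ?_).trans (List.map_id a)
  rw [if_neg (fun hc => h ⟨p, hp, hc⟩)]; rfl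

lemma replaceD_permW (π : Equiv.Perm D) (a : DataWord A D) (d d' : D) :
    replaceD (permW π a) (π d) (π d') = permW π (replaceD a d d') := by
  simp only [replaceD, permW, List.map_map]
  refine List.map_congr_left fun p _ => ?_
  simp only [Function.comp]
  by_cases h : p.2 = d
  · simp [h]
  · rw [if_neg (fun hc => h (π.injective hc)), if_neg h]

lemma permW_getElem?_snd (π : Equiv.Perm D) (c : DataWord A D) (i j : ℕ) :
    ((getElem? (permW π c) i).map Prod.snd = (getElem? (permW π c) j).map Prod.snd) ↔
    ((getElem? c i).map Prod.snd = (getElem? c j).map Prod.snd) := by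
  simp only [permW, List.getElem?_map, Option.map_map]
  have h : (Prod.snd ∘ fun p : A × D => (p.1, π p.2)) = π ∘ Prod.snd := rfl
  rw [h, ← Option.map_map, ← Option.map_map]
  exact ⟨fun h => Option.map_injective π.injective h, fun h => by rw [h]⟩

lemma iso_permW (π : Equiv.Perm D) {a b : DataWord A D} (h : Iso a b) :
    Iso (permW π a) (permW π b) := by
  obtain ⟨hlen, hfst, hsnd⟩ := h
  refine ⟨by simp [permW_length, hlen], fun i => ?_, fun i j => ?_⟩
  · simp only [permW, List.getElem?_map, Option.map_map]
    exact hfst i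
  · rw [permW_getElem?_snd, permW_getElem?_snd]; exact hsnd i j

lemma safeRepl_permW (π : Equiv.Perm D) {a : DataWord A D} {d d' : D}
    (h : SafeRepl d d' a) : SafeRepl (π d) (π d') (permW π a) := by
  unfold SafeRepl at *
  rw [replaceD_permW]
  exact iso_permW π h
/-- element-wise permutation on factored output elements -/
def pfo (π : Equiv.Perm D) : FOElem G D → FOElem G D
  | .tri g d o => .tri g (π d) o
  | .left => .left
  | .middle => .middle
  | .right => .right

lemma permFO_eq_map (π : Equiv.Perm D) (l : List (FOElem G D)) :
    permFO π l = l.map (pfo π) := by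
  unfold permFO
  refine List.map_congr_left fun e _ => ?_
  cases e <;> rfl

lemma pfo_injective (π : Equiv.Perm D) :
    Function.Injective (pfo (G := G) π) := by
  intro a b h
  cases a <;> cases b <;> simp_all [pfo]

lemma pfo_isMark (π : Equiv.Perm D) (e : FOElem G D) :
    (pfo π e).isMark = e.isMark := by
  cases e <;> rfl

lemma collapse_pfo (π : Equiv.Perm D) (l : List (FOElem G D)) :
    collapse (l.map (pfo π)) = (collapse l).map (pfo π) := by
  induction l with
  | nil => rfl
  | cons a t ih =>
    cases t with
    | nil => rfl
    | cons b rest =>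
      simp only [List.map_cons] at ih ⊢
      rw [collapse, collapse]
      by_cases h : a = b ∧ a.isMark = true
      · rw [if_pos ⟨by rw [h.1], by rw [pfo_isMark]; exact h.2⟩, if_pos h, ih]
      · have h' : ¬ (pfo π a = pfo π b ∧ (pfo π a).isMark = true) := by
          rintro ⟨h1, h2⟩
          exact h ⟨pfo_injective π h1, by rwa [pfo_isMark] at h2⟩
        rw [if_neg h', if_neg h, ih, List.map_cons]

lemma leftFac_permW {f : Transduction A G D} (hperm : PermInvariant f)
    (π : Equiv.Perm D) (a b : DataWord A D) :
    leftFac f (permW π a) (permW π b) = permFO π (leftFac f a b) := by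
  unfold leftFac
  rw [← permW_append, hperm, permFO_eq_map, ← collapse_pfo, permOut, List.map_map,
    permW_length, List.map_map]
  congr 1
  refine List.map_congr_left fun t _ => ?_
  simp only [Function.comp]
  by_cases h : t.2.2 ≤ a.length <;> simp [h, pfo]

lemma rightFac_permW {f : Transduction A G D} (hperm : PermInvariant f)
    (π : Equiv.Perm D) (a b : DataWord A D) :
    rightFac f (permW π a) (permW π b) = permFO π (rightFac f a b) := by
  unfold rightFac
  rw [← permW_append, hperm, permFO_eq_map, ← collapse_pfo, permOut, List.map_map,
    permW_length, List.map_map]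
  congr 1
  refine List.map_congr_left fun t _ => ?_
  simp only [Function.comp]
  by_cases h : a.length < t.2.2 <;> simp [h, pfo]

lemma permFO_injective (π : Equiv.Perm D) :
    Function.Injective (permFO (G := G) π) := by
  intro a b h
  rw [permFO_eq_map, permFO_eq_map] at h
  exact List.map_injective_iff.mpr (pfo_injective π) h
lemma memorable_permW {f : Transduction A G D} (hperm : PermInvariant f)
    (π : Equiv.Perm D) (e : D) (u : DataWord A D) :
    Memorable f e u → Memorable f (π e) (permW π u) := by
  rintro ⟨v, d'', hs, hne⟩
  refine ⟨permW π v, π d'', safeRepl_permW π hs, ?_⟩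
  rw [replaceD_permW, leftFac_permW hperm, leftFac_permW hperm]
  exact fun h => hne (permFO_injective π h)

lemma memorable_permW_iff {f : Transduction A G D} (hperm : PermInvariant f)
    (π : Equiv.Perm D) (e : D) (u : DataWord A D) :
    Memorable f (π e) (permW π u) ↔ Memorable f e u := by
  refine ⟨fun h => ?_, memorable_permW hperm π e u⟩
  have := memorable_permW hperm π.symm _ _ h
  rwa [Equiv.symm_apply_apply, permW_symm_permW] at this

lemma vulnerable_permW {f : Transduction A G D} (hperm : PermInvariant f)
    (π : Equiv.Perm D) (e : D) (u : DataWord A D) :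
    Vulnerable f e u → Vulnerable f (π e) (permW π u) := by
  rintro ⟨u', v, d'', hno, hs, hne⟩
  refine ⟨permW π u', permW π v, π d'', ?_, ?_, ?_⟩
  · rw [occursIn_permW]; exact hno
  · rw [← permW_append, ← permW_append]; exact safeRepl_permW π hs
  · rw [← permW_append, replaceD_permW, rightFac_permW hperm, rightFac_permW hperm]
    exact fun h => hne (permFO_injective π h)

lemma vulnerable_permW_iff {f : Transduction A G D} (hperm : PermInvariant f)
    (π : Equiv.Perm D) (e : D) (u : DataWord A D) :
    Vulnerable f (π e) (permW π u) ↔ Vulnerable f e u := by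
  refine ⟨fun h => ?_, vulnerable_permW hperm π e u⟩
  have := vulnerable_permW hperm π.symm _ _ h
  rwa [Equiv.symm_apply_apply, permW_symm_permW] at this
lemma occursIn_append {d : D} {a b : DataWord A D} :
    OccursIn d (a ++ b) ↔ OccursIn d a ∨ OccursIn d b := by
  simp only [OccursIn, List.mem_append]
  constructor
  · rintro ⟨p, hp | hp, hd⟩
    · exact Or.inl ⟨p, hp, hd⟩
    · exact Or.inr ⟨p, hp, hd⟩
  · rintro (⟨p, hp, hd⟩ | ⟨p, hp, hd⟩)
    · exact ⟨p, Or.inl hp, hd⟩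
    · exact ⟨p, Or.inr hp, hd⟩

lemma safe_not_occ {d d' : D} {w : DataWord A D} (hs : SafeRepl d d' w)
    (hocc : OccursIn d w) (hne : d' ≠ d) : ¬ OccursIn d' w := by
  rintro ⟨q, hq, hq2⟩
  obtain ⟨p, hp, hp2⟩ := hocc
  obtain ⟨i, hi⟩ := List.mem_iff_getElem?.mp hp
  obtain ⟨j, hj⟩ := List.mem_iff_getElem?.mp hq
  have hiff := hs.2.2 i j
  have hri : (getElem? (replaceD w d d') i).map Prod.snd = some d' := by
    simp [replaceD, List.getElem?_map, hi, hp2]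
  have hrj : (getElem? (replaceD w d d') j).map Prod.snd = some d' := by
    simp [replaceD, List.getElem?_map, hj, hq2, if_neg hne]
  have : (getElem? w i).map Prod.snd = (getElem? w j).map Prod.snd :=
    hiff.mp (hri.trans hrj.symm)
  rw [hi, hj] at this
  simp only [Option.map_some] at this
  rw [hp2, hq2] at this
  exact hne (Option.some_injective _ this).symm

lemma permW_fix {σ : Equiv.Perm D} {w : DataWord A D}
    (h : ∀ p ∈ w, σ p.2 = p.2) : permW σ w = w := by
  refine (List.map_congr_left fun p hp => ?_).trans (List.map_id w)
  rw [h p hp]; rfl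

lemma permW_swap_eq_replaceD {c d'' : D} {v : DataWord A D}
    (h : ¬ OccursIn d'' v) : permW (Equiv.swap c d'') v = replaceD v c d'' := by
  refine List.map_congr_left fun p hp => ?_
  by_cases hc : p.2 = c
  · simp [hc, Equiv.swap_apply_left]
  · rw [if_neg hc, Equiv.swap_apply_of_ne_of_ne hc (fun h2 => h ⟨p, hp, h2⟩)]

lemma not_memorable_of_not_occ {f : Transduction A G D} {c : D}
    {w : DataWord A D} (hc : ¬ OccursIn c w) : ¬ Memorable f c w := by
  rintro ⟨v, d'', _, hne⟩
  exact hne (by rw [replaceD_not_occ hc])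

lemma not_vulnerable_of_not_occ {f : Transduction A G D}
    (hperm : PermInvariant f) (hpeek : NoDataPeeking f) {c : D}
    {w : DataWord A D} (hc : ¬ OccursIn c w) : ¬ Vulnerable f c w := by
  rintro ⟨u', v, d'', hno, hs, hne⟩
  apply hne
  by_cases hv : OccursIn c v
  · by_cases hdc : d'' = c
    · rw [hdc, replaceD_self]
    · have hcw : OccursIn c (w ++ u' ++ v) := occursIn_append.mpr (Or.inr hv)
      have hd'' : ¬ OccursIn d'' (w ++ u' ++ v) := safe_not_occ hs hcw hdc
      have hd2 : ¬ OccursIn d'' v := fun h => hd'' (occursIn_append.mpr (Or.inr h))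
      set σ := Equiv.swap c d'' with hσ
      have hwu : ¬ OccursIn c (w ++ u') := by
        rw [occursIn_append]; rintro (h | h); exacts [hc h, hno h]
      have hwu' : ¬ OccursIn d'' (w ++ u') := fun h =>
        hd'' (occursIn_append.mpr (Or.inl h))
      have h1 : permW σ (w ++ u') = w ++ u' := permW_fix fun p hp => by
        refine Equiv.swap_apply_of_ne_of_ne ?_ ?_
        · exact fun h => hwu ⟨p, hp, h⟩
        · exact fun h => hwu' ⟨p, hp, h⟩
      have h2 : permW σ v = replaceD v c d'' := permW_swap_eq_replaceD hd2
      have key : (w ++ u') ++ replaceD v c d'' = permW σ ((w ++ u') ++ v) := by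
        rw [permW_append, h1, h2]
      unfold rightFac
      rw [key, hperm]
      congr 1
      rw [permOut, List.map_map]
      refine List.map_congr_left fun t ht => ?_
      simp only [Function.comp, List.length_append]
      by_cases ho : w.length + u'.length < t.2.2
      · rw [if_pos ho, if_pos ho]
      · rw [if_neg ho, if_neg ho]
        obtain ⟨i, a, hget, hle⟩ := hpeek ((w ++ u') ++ v) t ht
        have hi : i < (w ++ u').length := by
          rw [List.length_append]
          exact Nat.lt_of_lt_of_le (Nat.lt_of_succ_le hle) (Nat.not_lt.mp ho)
        have hmem : (a, t.2.1) ∈ w ++ u' :=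
          List.mem_iff_getElem?.mpr ⟨i, by rwa [List.getElem?_append_left hi] at hget⟩
        have h3 : σ t.2.1 = t.2.1 := by
          refine Equiv.swap_apply_of_ne_of_ne ?_ ?_
          · exact fun h => hwu ⟨(a, t.2.1), hmem, h⟩
          · exact fun h => hwu' ⟨(a, t.2.1), hmem, h⟩
        rw [h3]
  · rw [replaceD_not_occ hv]
end SSRT

open SSRT

/-- Lemma 36: safely replacing a non-influencing value
does not change which data values are memorable/vulnerable. -/
theorem iflValues_preserved
    {D A G : Type} [DecidableEq D] [Infinite D] [DecidableEq G]
    [Fintype A] [Fintype G]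
    (f : Transduction A G D)
    (hperm : PermInvariant f) (hpeek : NoDataPeeking f)
    (u : DataWord A D) (e d d' : D)
    (hd : ¬ Influencing f d u) (hsafe : SafeRepl d d' u) :
    (Memorable f e u ↔ Memorable f e (replaceD u d d')) ∧
    (Vulnerable f e u ↔ Vulnerable f e (replaceD u d d')) := by
  have hdm : ¬ Memorable f d u := fun h => hd (Or.inl h)
  have hdv : ¬ Vulnerable f d u := fun h => hd (Or.inr h)
  by_cases hocc : OccursIn d u
  · by_cases hdd : d' = d
    · rw [hdd, replaceD_self]; exact ⟨Iff.rfl, Iff.rfl⟩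
    · have hd'occ : ¬ OccursIn d' u := safe_not_occ hsafe hocc hdd
      rw [(permW_swap_eq_replaceD hd'occ).symm]
      set π := Equiv.swap d d' with hπ
      by_cases he : e = d
      · subst he
        have hnot : ¬ OccursIn e (permW π u) := by
          have h1 : π d' = e := Equiv.swap_apply_right e d'
          rw [← h1, occursIn_permW]
          exact hd'occ
        exact ⟨⟨fun h => absurd h hdm,
                fun h => absurd h (not_memorable_of_not_occ hnot)⟩,
               ⟨fun h => absurd h hdv,
                fun h => absurd h (not_vulnerable_of_not_occ hperm hpeek hnot)⟩⟩
      · by_cases he' : e = d'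
        · subst he'
          have h1 : π d = e := Equiv.swap_apply_left d e
          have hm := memorable_permW_iff hperm π d u
          have hv := vulnerable_permW_iff hperm π d u
          rw [h1] at hm hv
          exact ⟨⟨fun h => absurd h (not_memorable_of_not_occ hd'occ),
                  fun h => absurd (hm.mp h) hdm⟩,
                 ⟨fun h => absurd h (not_vulnerable_of_not_occ hperm hpeek hd'occ),
                  fun h => absurd (hv.mp h) hdv⟩⟩
        · have hπe : π e = e := Equiv.swap_apply_of_ne_of_ne he he'
          have hm := memorable_permW_iff hperm π e u
          have hv := vulnerable_permW_iff hperm π e u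
          rw [hπe] at hm hv
          exact ⟨hm.symm, hv.symm⟩
  · rw [replaceD_not_occ hocc]; exact ⟨Iff.rfl, Iff.rfl⟩
end
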